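/- Let V be a finite type, w : V → V → ℕ∞, d : ℕ, and let w^{≤d} be the capped graph on V. Then for all u ≠ v, dist_{w^{≤d}}(u,v) = min(dist_w(u,v), d). -/

import Mathlib

/-- Weight of a walk starting at `u` and visiting the vertices of `p` in order. -/
def walkWeight {V : Type*} (w : V → V → ℕ∞) : V → List V → ℕ∞
  | _, [] => 0
  | u, x :: xs => w u x + walkWeight w x xs

/-- Shortest-path distance: infimum of weights of walks from `u` to `v`. -/
noncomputable def gdist {V : Type*} (w : V → V → ℕ∞) (u v : V) : ℕ∞ :=
  ⨅ (p : List V) (_ : (u :: p).getLast (List.cons_ne_nil u p) = v), walkWeight w u p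

/-- Eccentricity of a vertex. -/
noncomputable def ecc {V : Type*} (w : V → V → ℕ∞) (v : V) : ℕ∞ :=
  ⨆ u, gdist w v u

/-- Radius. -/
noncomputable def rad {V : Type*} (w : V → V → ℕ∞) : ℕ∞ :=
  ⨅ v, ecc w v

/-- Diameter. -/
noncomputable def diam {V : Type*} (w : V → V → ℕ∞) : ℕ∞ :=
  ⨆ v, ecc w v

/-- Capped graph: add an edge of weight `d` between every ordered pair of distinct vertices. -/
noncomputable def capped {V : Type*} [DecidableEq V] (w : V → V → ℕ∞) (d : ℕ) : V → V → ℕ∞ :=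
  fun u v => if u = v then w u v else min (w u v) (d : ℕ∞)

/-!
A walk in the capped graph only uses edges of weight at most the original ones, so
`dist_{w^{≤d}} ≤ dist_w`, and the direct edge `u → v` gives `dist_{w^{≤d}}(u, v) ≤ d`.
Conversely, `min (· , d)` is subadditive, so capping the weight of a whole `w`-walk at `d`
is bounded by the sum of the capped edge weights, which is at most its weight in `w^{≤d}`.
-/

theorem min_add_le_min_add_min {α : Type*} [AddCommMonoid α] [LinearOrder α]
    [CanonicallyOrderedAdd α] [IsOrderedAddMonoid α] (a b c : α) :
    min (a + b) c ≤ min a c + min b c := by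
  rcases le_total a c with hac | hca
  · rcases le_total b c with hbc | hcb
    · rw [min_eq_left hac, min_eq_left hbc]
      exact min_le_left _ _
    · rw [min_eq_right hcb]
      exact (min_le_right _ _).trans le_add_self
  · rw [min_eq_right hca]
    exact (min_le_right _ _).trans le_self_add

section Walks

variable {V : Type*}

theorem walkWeight_mono {w w' : V → V → ℕ∞} (h : ∀ u v, w u v ≤ w' u v) (u : V) (p : List V) :
    walkWeight w u p ≤ walkWeight w' u p := by
  induction p generalizing u with
  | nil => exact le_rfl
  | cons x xs ih => exact add_le_add (h u x) (ih x)

theorem min_walkWeight_le {w w' : V → V → ℕ∞} {c : ℕ∞} (h : ∀ u v, min (w u v) c ≤ w' u v)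
    (u : V) (p : List V) : min (walkWeight w u p) c ≤ walkWeight w' u p := by
  induction p generalizing u with
  | nil => exact min_le_left _ _
  | cons x xs ih =>
    exact (min_add_le_min_add_min _ _ _).trans (add_le_add (h u x) (ih x))

theorem gdist_le_walkWeight (w : V → V → ℕ∞) {u v : V} (p : List V)
    (hp : (u :: p).getLast (List.cons_ne_nil u p) = v) : gdist w u v ≤ walkWeight w u p :=
  iInf₂_le p hp

theorem gdist_le_edge (w : V → V → ℕ∞) (u v : V) : gdist w u v ≤ w u v := by
  simpa [walkWeight] using gdist_le_walkWeight w [v] rfl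

theorem gdist_mono {w w' : V → V → ℕ∞} (h : ∀ u v, w u v ≤ w' u v) (u v : V) :
    gdist w u v ≤ gdist w' u v :=
  iInf₂_mono fun p _ => walkWeight_mono h u p

theorem min_gdist_le {w w' : V → V → ℕ∞} {c : ℕ∞} (h : ∀ u v, min (w u v) c ≤ w' u v)
    (u v : V) : min (gdist w u v) c ≤ gdist w' u v :=
  le_iInf₂ fun p hp =>
    (min_le_min_right c (gdist_le_walkWeight w p hp)).trans (min_walkWeight_le h u p)

end Walks

section Capped

variable {V : Type*} [DecidableEq V] (w : V → V → ℕ∞) (d : ℕ)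

theorem capped_le (u v : V) : capped w d u v ≤ w u v := by
  unfold capped
  split_ifs <;> simp

theorem min_le_capped (u v : V) : min (w u v) (d : ℕ∞) ≤ capped w d u v := by
  unfold capped
  split_ifs <;> simp

theorem capped_of_ne {u v : V} (huv : u ≠ v) : capped w d u v = min (w u v) (d : ℕ∞) :=
  if_neg huv

end Capped

theorem stmt9_general {V : Type*} [DecidableEq V] (w : V → V → ℕ∞) (d : ℕ) :
    ∀ u v : V, u ≠ v → gdist (capped w d) u v = min (gdist w u v) (d : ℕ∞) := by
  intro u v huv
  refine le_antisymm (le_min (gdist_mono (capped_le w d) u v) ?_)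
    (min_gdist_le (min_le_capped w d) u v)
  calc gdist (capped w d) u v ≤ capped w d u v := gdist_le_edge _ u v
    _ = min (w u v) (d : ℕ∞) := capped_of_ne w d huv
    _ ≤ d := min_le_right _ _

theorem stmt9 {V : Type*} [Fintype V] [DecidableEq V] (w : V → V → ℕ∞) (d : ℕ) :
    ∀ u v : V, u ≠ v → gdist (capped w d) u v = min (gdist w u v) (d : ℕ∞) :=
  stmt9_general w d
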